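/- For any λ > 0 and any function g on the nonnegative integers for which both sides are finite, the Poisson distribution satisfies the Poincaré inequality Var_{Π_λ}(g) ≤ λ Σ_{x≥0} Π_λ(x) (g(x+1) − g(x))², i.e. the Poisson mass function Π_λ has Poincaré constant λ. -/

import Mathlib

noncomputable section
open scoped BigOperators ENNReal
open Real

/-- Poisson mass function with mean `l`. -/
def poissonPmf (l : ℝ) : ℕ → ℝ := fun x => Real.exp (-l) * l ^ x / (Nat.factorial x)

/-- Mean of a mass function on ℕ. -/
def pmfMean (P : ℕ → ℝ) : ℝ := ∑' x : ℕ, (x : ℝ) * P x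

/-- Scaled score function. -/
def scaledScore (P : ℕ → ℝ) (x : ℕ) : ℝ :=
  ((x : ℝ) + 1) * P (x + 1) / (pmfMean P * P x) - 1

/-- Scaled Fisher information. -/
def scaledFisher (P : ℕ → ℝ) : ℝ := pmfMean P * ∑' x : ℕ, P x * (scaledScore P x) ^ 2

/-- Convolution of mass functions on ℕ. -/
def pmfConv (P Q : ℕ → ℝ) : ℕ → ℝ := fun x => ∑ y ∈ Finset.range (x + 1), P y * Q (x - y)

/-- Point mass at 0. -/
def delta0 : ℕ → ℝ := fun x => if x = 0 then 1 else 0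

/-- Convolution of a list of mass functions. -/
def convList (l : List (ℕ → ℝ)) : ℕ → ℝ := l.foldr pmfConv delta0

/-- n-fold convolution power. -/
def convPow (Q : ℕ → ℝ) : ℕ → (ℕ → ℝ)
  | 0 => delta0
  | n + 1 => pmfConv Q (convPow Q n)

/-- α-thinning of a mass function. -/
def thin (a : ℝ) (P : ℕ → ℝ) : ℕ → ℝ := fun x =>
  ∑' y : ℕ, (if x ≤ y then (y.choose x : ℝ) * a ^ x * (1 - a) ^ (y - x) * P y else 0)

/-- Relative entropy. -/
def relEnt (P Q : ℕ → ℝ) : ℝ := ∑' x : ℕ, P x * Real.log (P x / Q x)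

/-- Discrete (Shannon) entropy. -/
def pmfEntropy (P : ℕ → ℝ) : ℝ := -∑' x : ℕ, P x * Real.log (P x)

/-- Entropy functional Ent_P(f). -/
def entFunc (P f : ℕ → ℝ) : ℝ :=
  (∑' x : ℕ, P x * f x * Real.log (f x)) -
    (∑' x : ℕ, P x * f x) * Real.log (∑' x : ℕ, P x * f x)

/-- Variance of `g` under `P`. -/
def pmfVar (P g : ℕ → ℝ) : ℝ := ∑' x : ℕ, P x * (g x - ∑' y : ℕ, P y * g y) ^ 2

/-- Ultra-log-concavity: `x P(x)² ≥ (x+1) P(x+1) P(x-1)` for all `x ≥ 1`. -/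
def IsULC (P : ℕ → ℝ) : Prop :=
  ∀ x : ℕ, ((x : ℝ) + 2) * P (x + 2) * P x ≤ ((x : ℝ) + 1) * P (x + 1) ^ 2

/-- `P(x-1)` with the convention `P(-1) = 0`. -/
def pm1 (P : ℕ → ℝ) : ℕ → ℝ := fun x => if x = 0 then 0 else P (x - 1)

/-- Johnstone–MacGibbon Fisher information, valued in `ℝ≥0∞`. -/
def jmFisher (P : ℕ → ℝ) : ℝ≥0∞ :=
  ∑' x : ℕ, if P x = 0 ∧ pm1 P x ≠ 0 then ⊤
    else ENNReal.ofReal (P x * (pm1 P x / P x - 1) ^ 2)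

/-- c-log-concavity. -/
def CLogConcave (P : ℕ → ℝ) (c : ℝ) : Prop :=
  ∀ x : ℕ, c ≤ P x / P (x + 1) - pm1 P x / P x

/-- Binomial mass function. -/
def binomialPmf (n : ℕ) (p : ℝ) : ℕ → ℝ := fun x =>
  if x ≤ n then (n.choose x : ℝ) * p ^ x * (1 - p) ^ (n - x) else 0

/-- Bernoulli mass function. -/
def bernoulliPmf (p : ℝ) : ℕ → ℝ := fun x =>
  if x = 0 then 1 - p else if x = 1 then p else 0

/-!
Adding one independent Bernoulli(p) step to Bin(n, p) gives Bin(n + 1, p), so conditioning on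
that step splits the variance: `Var_{n+1} g = p(1-p) E_n (Δg)² + Var_n (A g)`, where
`A g x = (1-p) g x + p g (x+1)`. Since `Δ (A g) = A (Δ g)` and `(A u)² ≤ A (u²)` by convexity,
induction gives the binomial Poincaré inequality `Var_{n+1} g ≤ (n+1) p(1-p) E_n (Δg)²`.
For `p = λ/(n+1)` the constant is at most `λ`, and letting `n → ∞` both sides converge to the
Poisson quantities: pointwise by the Poisson limit theorem, and under the sums by dominated
convergence, since `Bin(n, p)(x) ≤ (np)^x / x! ≤ λ^x / x!`.
-/

open Filter Topology Finset
open scoped fwdDiff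

def bernoulliAvg (p : ℝ) (f : ℕ → ℝ) (x : ℕ) : ℝ := (1 - p) * f x + p * f (x + 1)

def binomialExpect (n : ℕ) (p : ℝ) (f : ℕ → ℝ) : ℝ :=
  ∑ x ∈ range (n + 1), binomialPmf n p x * f x

def binomialVar (n : ℕ) (p : ℝ) (g : ℕ → ℝ) : ℝ :=
  binomialExpect n p fun x => (g x - binomialExpect n p g) ^ 2

section Bernoulli

variable (p : ℝ) (f : ℕ → ℝ)

lemma bernoulliAvg_const (c : ℝ) : bernoulliAvg p (fun _ => c) = fun _ => c := by
  funext x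
  simp only [bernoulliAvg]
  ring

lemma fwdDiff_bernoulliAvg : Δ_[1] (bernoulliAvg p f) = bernoulliAvg p (Δ_[1] f) := by
  funext x
  simp only [fwdDiff, bernoulliAvg]
  ring

lemma bernoulliAvg_sq_sub (c : ℝ) :
    bernoulliAvg p (fun y => (f y - c) ^ 2) =
      fun x => p * (1 - p) * Δ_[1] f x ^ 2 + (bernoulliAvg p f x - c) ^ 2 := by
  funext x
  simp only [fwdDiff, bernoulliAvg]
  ring

lemma sq_bernoulliAvg_le {p : ℝ} (hp0 : 0 ≤ p) (hp1 : p ≤ 1) (x : ℕ) :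
    bernoulliAvg p f x ^ 2 ≤ bernoulliAvg p (fun y => f y ^ 2) x := by
  have hq : 0 ≤ 1 - p := sub_nonneg.mpr hp1
  have : bernoulliAvg p (fun y => f y ^ 2) x - bernoulliAvg p f x ^ 2 =
      p * (1 - p) * (f (x + 1) - f x) ^ 2 := by
    simp only [bernoulliAvg]
    ring
  nlinarith [mul_nonneg (mul_nonneg hp0 hq) (sq_nonneg (f (x + 1) - f x))]

end Bernoulli

section Binomial

variable {n : ℕ} {p : ℝ}

lemma binomialPmf_nonneg (hp0 : 0 ≤ p) (hp1 : p ≤ 1) (x : ℕ) : 0 ≤ binomialPmf n p x := by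
  have hq : 0 ≤ 1 - p := sub_nonneg.mpr hp1
  unfold binomialPmf
  split_ifs <;> positivity

lemma binomialPmf_of_lt {x : ℕ} (h : n < x) : binomialPmf n p x = 0 := by
  simp [binomialPmf, Nat.not_le.2 h]

lemma binomialPmf_succ_zero : binomialPmf (n + 1) p 0 = (1 - p) * binomialPmf n p 0 := by
  simp only [binomialPmf, if_pos (Nat.zero_le _), Nat.choose_zero_right, Nat.sub_zero]
  ring

lemma binomialPmf_succ_succ (x : ℕ) :
    binomialPmf (n + 1) p (x + 1) = (1 - p) * binomialPmf n p (x + 1) + p * binomialPmf n p x := by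
  rcases lt_trichotomy x n with hx | rfl | hx
  · obtain ⟨k, rfl⟩ := Nat.exists_eq_add_of_lt hx
    simp only [binomialPmf, Nat.choose_succ_succ', Nat.cast_add, if_pos (by omega : x ≤ x + k + 1),
      if_pos (by omega : x + 1 ≤ x + k + 1), if_pos (by omega : x + 1 ≤ x + k + 1 + 1),
      show x + k + 1 + 1 - (x + 1) = k + 1 by omega, show x + k + 1 - (x + 1) = k by omega,
      show x + k + 1 - x = k + 1 by omega]
    ring
  · simp only [binomialPmf, if_pos le_rfl, if_neg (by omega : ¬x + 1 ≤ x), Nat.choose_self,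
      Nat.sub_self]
    ring
  · simp [binomialPmf, show ¬x ≤ n by omega, show ¬x + 1 ≤ n by omega,
      show ¬x + 1 ≤ n + 1 by omega]

lemma tsum_binomialPmf_mul (f : ℕ → ℝ) :
    ∑' x, binomialPmf n p x * f x = binomialExpect n p f :=
  tsum_eq_sum fun x hx => by
    rw [binomialPmf_of_lt (by simpa using hx), zero_mul]

lemma binomialPmf_le_pow_div_factorial (hp0 : 0 ≤ p) (hp1 : p ≤ 1) (x : ℕ) :
    binomialPmf n p x ≤ (n * p) ^ x / x.factorial := by
  unfold binomialPmf
  split_ifs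
  · calc (n.choose x : ℝ) * p ^ x * (1 - p) ^ (n - x) ≤ (n.choose x : ℝ) * p ^ x :=
          mul_le_of_le_one_right (by positivity) (pow_le_one₀ (by linarith) (by linarith))
      _ ≤ (n : ℝ) ^ x / x.factorial * p ^ x := by gcongr; exact Nat.choose_le_pow_div x n
      _ = (n * p) ^ x / x.factorial := by ring
  · positivity

end Binomial

section BinomialExpect

variable {n : ℕ} {p : ℝ}

lemma binomialExpect_zero (f : ℕ → ℝ) : binomialExpect 0 p f = f 0 := by
  simp [binomialExpect, binomialPmf]

lemma binomialExpect_succ (f : ℕ → ℝ) :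
    binomialExpect (n + 1) p f = binomialExpect n p (bernoulliAvg p f) := by
  have hlast : binomialPmf n p (n + 1) = 0 := binomialPmf_of_lt n.lt_succ_self
  rw [binomialExpect, sum_range_succ', binomialPmf_succ_zero]
  simp only [binomialPmf_succ_succ, add_mul, sum_add_distrib]
  rw [sum_range_succ (fun k => (1 - p) * binomialPmf n p (k + 1) * f (k + 1)), hlast]
  simp only [binomialExpect, bernoulliAvg, mul_add, sum_add_distrib]
  rw [sum_range_succ' (fun x => binomialPmf n p x * ((1 - p) * f x))]
  ring_nf

lemma binomialExpect_const (c : ℝ) : binomialExpect n p (fun _ => c) = c := by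
  induction n with
  | zero => exact binomialExpect_zero _
  | succ n ih => rw [binomialExpect_succ, bernoulliAvg_const, ih]

lemma binomialExpect_add (f g : ℕ → ℝ) :
    binomialExpect n p (fun x => f x + g x) = binomialExpect n p f + binomialExpect n p g := by
  simp only [binomialExpect, mul_add, sum_add_distrib]

lemma binomialExpect_const_mul (c : ℝ) (f : ℕ → ℝ) :
    binomialExpect n p (fun x => c * f x) = c * binomialExpect n p f := by
  simp only [binomialExpect, mul_sum]
  exact sum_congr rfl fun x _ => by ring

lemma binomialExpect_mono (hp0 : 0 ≤ p) (hp1 : p ≤ 1) {f g : ℕ → ℝ} (h : ∀ x, f x ≤ g x) :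
    binomialExpect n p f ≤ binomialExpect n p g :=
  sum_le_sum fun x _ => mul_le_mul_of_nonneg_left (h x) (binomialPmf_nonneg hp0 hp1 x)

lemma binomialExpect_nonneg (hp0 : 0 ≤ p) (hp1 : p ≤ 1) {f : ℕ → ℝ} (h : ∀ x, 0 ≤ f x) :
    0 ≤ binomialExpect n p f :=
  sum_nonneg fun x _ => mul_nonneg (binomialPmf_nonneg hp0 hp1 x) (h x)

lemma binomialExpect_sq_sub (g : ℕ → ℝ) (c : ℝ) :
    binomialExpect n p (fun x => (g x - c) ^ 2) =
      binomialExpect n p (fun x => g x ^ 2) - 2 * c * binomialExpect n p g + c ^ 2 := by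
  have hsum := binomialExpect_const (n := n) (p := p) 1
  simp only [binomialExpect, mul_one] at hsum ⊢
  rw [← mul_one (c ^ 2), ← hsum, mul_sum, mul_sum, ← sum_sub_distrib, ← sum_add_distrib]
  exact sum_congr rfl fun x _ => by ring

lemma binomialExpect_sq_sub_eq_binomialVar_add (g : ℕ → ℝ) (c : ℝ) :
    binomialExpect n p (fun x => (g x - c) ^ 2) =
      binomialVar n p g + (binomialExpect n p g - c) ^ 2 := by
  rw [binomialVar, binomialExpect_sq_sub, binomialExpect_sq_sub]
  ring

lemma binomialVar_succ (g : ℕ → ℝ) :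
    binomialVar (n + 1) p g =
      p * (1 - p) * binomialExpect n p (fun x => Δ_[1] g x ^ 2) +
        binomialVar n p (bernoulliAvg p g) := by
  rw [binomialVar, binomialExpect_succ, binomialExpect_succ, bernoulliAvg_sq_sub,
    binomialExpect_add, binomialExpect_const_mul, binomialVar]

lemma binomialExpect_sq_fwdDiff_bernoulliAvg_le (hp0 : 0 ≤ p) (hp1 : p ≤ 1) (g : ℕ → ℝ) :
    binomialExpect n p (fun x => Δ_[1] (bernoulliAvg p g) x ^ 2) ≤
      binomialExpect (n + 1) p (fun x => Δ_[1] g x ^ 2) := by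
  rw [fwdDiff_bernoulliAvg, binomialExpect_succ]
  exact binomialExpect_mono hp0 hp1 (sq_bernoulliAvg_le _ hp0 hp1)

theorem binomialVar_succ_le (hp0 : 0 ≤ p) (hp1 : p ≤ 1) (g : ℕ → ℝ) :
    binomialVar (n + 1) p g ≤
      (n + 1) * (p * (1 - p)) * binomialExpect n p (fun x => Δ_[1] g x ^ 2) := by
  have hpq : 0 ≤ p * (1 - p) := mul_nonneg hp0 (sub_nonneg.mpr hp1)
  induction n generalizing g with
  | zero =>
    rw [binomialVar_succ]
    simp [binomialVar, binomialExpect_zero]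
  | succ n ih =>
    have hvar := ih (bernoulliAvg p g)
    have hdiff := binomialExpect_sq_fwdDiff_bernoulliAvg_le (n := n) hp0 hp1 g
    rw [binomialVar_succ]
    push_cast
    nlinarith [mul_le_mul_of_nonneg_left hdiff (mul_nonneg (by positivity : (0 : ℝ) ≤ n + 1) hpq)]

end BinomialExpect

section PoissonLimit

variable {lam : ℝ} {p : ℕ → ℝ}

lemma tendsto_binomialPmf (hlim : Tendsto (fun n : ℕ => n * p n) atTop (𝓝 lam)) (x : ℕ) :
    Tendsto (fun n => binomialPmf n (p n) x) atTop (𝓝 (poissonPmf lam x)) := by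
  refine (ProbabilityTheory.tendsto_choose_mul_pow_of_tendsto_mul_atTop x hlim).congr' ?_
  filter_upwards [eventually_ge_atTop x] with n hn
  simp [binomialPmf, hn]

lemma tendsto_binomialExpect (hp : ∀ᶠ n in atTop, 0 ≤ p n ∧ p n ≤ 1)
    (hbound : ∀ᶠ n : ℕ in atTop, n * p n ≤ lam)
    (hlim : Tendsto (fun n : ℕ => n * p n) atTop (𝓝 lam)) {f : ℕ → ℝ}
    (hf : Summable fun x => poissonPmf lam x * f x) :
    Tendsto (fun n => binomialExpect n (p n) f) atTop (𝓝 (∑' x, poissonPmf lam x * f x)) := by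
  simp only [← tsum_binomialPmf_mul]
  have hdom : Summable fun x : ℕ => |lam ^ x / x.factorial * f x| := by
    refine (hf.mul_left (Real.exp lam)).abs.congr fun x => ?_
    rw [poissonPmf, ← mul_assoc, mul_div_assoc, ← mul_assoc, ← Real.exp_add]
    simp
  refine tendsto_tsum_of_dominated_convergence hdom
    (fun x => (tendsto_binomialPmf hlim x).mul_const (f x)) ?_
  filter_upwards [hp, hbound] with n ⟨hp0, hp1⟩ hnp x
  rw [norm_mul, Real.norm_of_nonneg (binomialPmf_nonneg hp0 hp1 x), abs_mul, Real.norm_eq_abs]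
  gcongr
  calc binomialPmf n (p n) x ≤ (n * p n) ^ x / x.factorial :=
        binomialPmf_le_pow_div_factorial hp0 hp1 x
    _ ≤ lam ^ x / x.factorial := by gcongr
    _ ≤ |lam ^ x / x.factorial| := le_abs_self _

lemma eventually_div_natCast_mem_Icc (hlam : 0 ≤ lam) :
    ∀ᶠ n : ℕ in atTop, 0 ≤ lam / n ∧ lam / n ≤ 1 := by
  filter_upwards [eventually_ge_atTop ⌈lam⌉₊] with n hn
  exact ⟨by positivity, div_le_one_of_le₀ (Nat.ceil_le.mp hn) n.cast_nonneg⟩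

lemma tendsto_binomialExpect_succ_div (hlam : 0 ≤ lam) {f : ℕ → ℝ}
    (hf : Summable fun x => poissonPmf lam x * f x) :
    Tendsto (fun n : ℕ => binomialExpect (n + 1) (lam / (n + 1 : ℕ)) f) atTop
      (𝓝 (∑' x, poissonPmf lam x * f x)) := by
  have hnp : ∀ᶠ n : ℕ in atTop, (n : ℝ) * (lam / n) = lam := by
    filter_upwards [eventually_gt_atTop 0] with n hn
    field_simp
  refine (tendsto_binomialExpect (eventually_div_natCast_mem_Icc hlam)
    (hnp.mono fun n h => h.le) ?_ hf).comp (tendsto_add_atTop_nat 1)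
  exact tendsto_const_nhds.congr' (hnp.mono fun n h => h.symm)

lemma tendsto_binomialExpect_div_succ (hlam : 0 ≤ lam) {f : ℕ → ℝ}
    (hf : Summable fun x => poissonPmf lam x * f x) :
    Tendsto (fun n : ℕ => binomialExpect n (lam / (n + 1 : ℕ)) f) atTop
      (𝓝 (∑' x, poissonPmf lam x * f x)) := by
  refine tendsto_binomialExpect ((tendsto_add_atTop_nat 1).eventually
    (eventually_div_natCast_mem_Icc hlam)) (.of_forall fun n => ?_) ?_ hf
  · rw [mul_div_assoc', div_le_iff₀ (by positivity)]
    push_cast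
    nlinarith
  · simpa using ((tendsto_natCast_div_add_atTop (1 : ℝ)).const_mul lam).congr fun n => by
      ring

end PoissonLimit

theorem binomialVar_succ_le_mul_binomialExpect {lam : ℝ} {n : ℕ} (hlam : 0 ≤ lam)
    (hp : lam / (n + 1 : ℕ) ≤ 1) (g : ℕ → ℝ) :
    binomialVar (n + 1) (lam / (n + 1 : ℕ)) g ≤
      lam * binomialExpect n (lam / (n + 1 : ℕ)) (fun x => Δ_[1] g x ^ 2) := by
  have hp0 : 0 ≤ lam / (n + 1 : ℕ) := by positivity
  refine (binomialVar_succ_le hp0 hp g).trans (mul_le_mul_of_nonneg_right ?_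
    (binomialExpect_nonneg hp0 hp fun x => sq_nonneg _))
  rw [← mul_assoc, show ((n : ℝ) + 1) * (lam / (n + 1 : ℕ)) = lam by push_cast; field_simp]
  exact mul_le_of_le_one_right hlam (by linarith)

/-- the Poisson distribution has Poincaré constant λ. -/
theorem poisson_poincare (lam : ℝ) (hlam : 0 < lam) (g : ℕ → ℝ)
    (h1 : Summable (fun x : ℕ => poissonPmf lam x * g x))
    (h2 : Summable (fun x : ℕ =>
      poissonPmf lam x * (g x - ∑' y : ℕ, poissonPmf lam y * g y) ^ 2))
    (h3 : Summable (fun x : ℕ => poissonPmf lam x * (g (x + 1) - g x) ^ 2)) :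
    pmfVar (poissonPmf lam) g ≤
      lam * ∑' x : ℕ, poissonPmf lam x * (g (x + 1) - g x) ^ 2 := by
  set m := ∑' y : ℕ, poissonPmf lam y * g y
  have hmean := tendsto_binomialExpect_succ_div hlam.le h1
  have hsq := tendsto_binomialExpect_succ_div hlam.le h2
  have hdiff := tendsto_binomialExpect_div_succ hlam.le h3
  have hvar := hsq.sub ((hmean.sub_const m).pow 2)
  rw [sub_self, zero_pow two_ne_zero, sub_zero] at hvar
  refine le_of_tendsto_of_tendsto hvar (hdiff.const_mul lam) ?_
  filter_upwards [(tendsto_add_atTop_nat 1).eventually (eventually_div_natCast_mem_Icc hlam.le)]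
    with n ⟨_, hp⟩
  rw [binomialExpect_sq_sub_eq_binomialVar_add, add_sub_cancel_right]
  exact binomialVar_succ_le_mul_binomialExpect hlam.le hp g

end
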